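/- Let y be the disk billiard trajectory associated with θ₀ ∈ ℝ and δ ∈ (0,π) with δ/π irrational. Then: (i) y is not periodic, i.e. there is no T₁ > 0 with y(t + T₁) = y(t) for all t ≥ 0; and (ii) ‖y(t)‖ ≥ cos(δ/2) for all t ≥ 0; in particular, for the nonempty open set U = {z ∈ ℝ² : ‖z‖ < cos(δ/2)} one has λ({t ∈ [0,T] : y(t) ∈ U}) = 0 for every T > 0, so y is not uniformly distributed with respect to the (normalized) two-dimensional Lebesgue measure on the closed unit disk. Hence the flat two-dimensional disk does not satisfy the dichotomy property. -/

import Mathlib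

open MeasureTheory Filter

/-- The `k`-th bounce point `b_k = (cos(θ₀ + kδ), sin(θ₀ + kδ))` on the unit circle. -/
noncomputable def diskBounce (θ₀ δ : ℝ) (k : ℕ) : EuclideanSpace ℝ (Fin 2) :=
  WithLp.toLp 2 ![Real.cos (θ₀ + k * δ), Real.sin (θ₀ + k * δ)]

/-- The unit-speed billiard trajectory of the closed unit disk bouncing at the points `b_k`:
with `ℓ = 2 sin(δ/2)`, `y(t) = b_k + ((t − kℓ)/ℓ)·(b_{k+1} − b_k)` for `t ∈ [kℓ, (k+1)ℓ]`. -/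
noncomputable def diskBilliard (θ₀ δ : ℝ) (t : ℝ) : EuclideanSpace ℝ (Fin 2) :=
  diskBounce θ₀ δ (⌊t / (2 * Real.sin (δ / 2))⌋.toNat) +
    ((t - (⌊t / (2 * Real.sin (δ / 2))⌋.toNat : ℝ) * (2 * Real.sin (δ / 2))) /
        (2 * Real.sin (δ / 2))) •
      (diskBounce θ₀ δ (⌊t / (2 * Real.sin (δ / 2))⌋.toNat + 1) -
        diskBounce θ₀ δ (⌊t / (2 * Real.sin (δ / 2))⌋.toNat))

lemma norm_sq_eval (θ₀ δ : ℝ) (k : ℕ) (s : ℝ) :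
    ‖diskBounce θ₀ δ k + s • (diskBounce θ₀ δ (k+1) - diskBounce θ₀ δ k)‖^2
      = (1-s)^2 + s^2 + 2*s*(1-s)*Real.cos δ := by
  have hv : ∀ v : EuclideanSpace ℝ (Fin 2), ‖v‖^2 = (v 0)^2 + (v 1)^2 := by
    intro v
    rw [EuclideanSpace.norm_eq, Fin.sum_univ_two, Real.sq_sqrt (by positivity)]
    simp [Real.norm_eq_abs, sq_abs]
  rw [hv]
  simp only [PiLp.add_apply, PiLp.smul_apply, PiLp.sub_apply, diskBounce, PiLp.toLp_apply,
    Matrix.cons_val_zero, Matrix.cons_val_one, Matrix.head_cons, smul_eq_mul,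
    Nat.cast_add, Nat.cast_one]
  have h1 := Real.sin_sq_add_cos_sq (θ₀ + (k:ℝ)*δ)
  have h2 := Real.sin_sq_add_cos_sq (θ₀ + ((k:ℝ)+1)*δ)
  have h3 : Real.cos δ = Real.cos (θ₀+((k:ℝ)+1)*δ) * Real.cos (θ₀+(k:ℝ)*δ)
      + Real.sin (θ₀+((k:ℝ)+1)*δ) * Real.sin (θ₀+(k:ℝ)*δ) := by
    rw [← Real.cos_sub]; ring_nf
  nlinarith [h1, h2, h3, sq_nonneg s]

set_option maxHeartbeats 1000000 in
/-- A disk billiard trajectory with `δ/π` irrational is (i) not periodic, and (ii) stays at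
distance at least `cos(δ/2)` from the center; in particular it spends zero time in the open
disk of radius `cos(δ/2)`, hence is not uniformly distributed. -/
theorem statement_8 (θ₀ δ : ℝ) (hδ : δ ∈ Set.Ioo (0 : ℝ) Real.pi)
    (hirr : Irrational (δ / Real.pi)) :
    (¬ ∃ T₁ : ℝ, 0 < T₁ ∧ ∀ t : ℝ, 0 ≤ t →
        diskBilliard θ₀ δ (t + T₁) = diskBilliard θ₀ δ t) ∧
    (∀ t : ℝ, 0 ≤ t → Real.cos (δ / 2) ≤ ‖diskBilliard θ₀ δ t‖) ∧
    (∀ T : ℝ, 0 < T →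
      volume {t ∈ Set.Icc (0 : ℝ) T |
        diskBilliard θ₀ δ t ∈ {z : EuclideanSpace ℝ (Fin 2) | ‖z‖ < Real.cos (δ / 2)}} = 0) := by
  obtain ⟨hδ0, hδπ⟩ := hδ
  have hsin : 0 < Real.sin (δ/2) :=
    Real.sin_pos_of_pos_of_lt_pi (by linarith) (by linarith [Real.pi_pos])
  set ℓ : ℝ := 2 * Real.sin (δ/2) with hℓdef
  have hℓ : 0 < ℓ := by positivity
  have hcosδ : Real.cos δ = 1 - 2 * Real.sin (δ/2)^2 := by
    have h := Real.cos_two_mul (δ/2)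
    rw [show 2*(δ/2) = δ by ring] at h
    nlinarith [Real.sin_sq_add_cos_sq (δ/2)]
  -- structure lemma
  have hstruct : ∀ t : ℝ, 0 ≤ t →
      ∃ k : ℕ, ∃ s : ℝ, 0 ≤ s ∧ s < 1 ∧ s * ℓ = t - (k:ℝ)*ℓ ∧
        diskBilliard θ₀ δ t
          = diskBounce θ₀ δ k + s • (diskBounce θ₀ δ (k+1) - diskBounce θ₀ δ k) := by
    intro t ht
    refine ⟨(⌊t / ℓ⌋).toNat, (t - ((⌊t / ℓ⌋).toNat : ℝ)*ℓ)/ℓ, ?_, ?_, ?_, rfl⟩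
    · have hk : ((⌊t / ℓ⌋).toNat : ℝ) = (⌊t / ℓ⌋ : ℝ) := by
        exact_mod_cast congrArg (Int.cast : ℤ → ℝ)
          (Int.toNat_of_nonneg (Int.floor_nonneg.mpr (div_nonneg ht hℓ.le)))
      rw [hk]
      have h2 : (⌊t / ℓ⌋ : ℝ) * ℓ ≤ t := (le_div_iff₀ hℓ).mp (Int.floor_le (t / ℓ))
      exact div_nonneg (by linarith) hℓ.le
    · have hk : ((⌊t / ℓ⌋).toNat : ℝ) = (⌊t / ℓ⌋ : ℝ) := by
        exact_mod_cast congrArg (Int.cast : ℤ → ℝ)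
          (Int.toNat_of_nonneg (Int.floor_nonneg.mpr (div_nonneg ht hℓ.le)))
      rw [hk, div_lt_one hℓ]
      have h3 : t < ((⌊t / ℓ⌋ : ℝ) + 1) * ℓ :=
        (div_lt_iff₀ hℓ).mp (Int.lt_floor_add_one (t / ℓ))
      linarith
    · field_simp
  -- part (ii)
  have part2 : ∀ t : ℝ, 0 ≤ t → Real.cos (δ / 2) ≤ ‖diskBilliard θ₀ δ t‖ := by
    intro t ht
    obtain ⟨k, s, hs0, hs1, -, heq⟩ := hstruct t ht
    have hns : ‖diskBilliard θ₀ δ t‖^2 = (1-s)^2 + s^2 + 2*s*(1-s)*Real.cos δ := by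
      rw [heq]; exact norm_sq_eval θ₀ δ k s
    have hcosnn : 0 ≤ Real.cos (δ/2) :=
      Real.cos_nonneg_of_mem_Icc ⟨by linarith [Real.pi_pos], by linarith⟩
    have hcossq : Real.cos (δ/2)^2 = 1 - Real.sin (δ/2)^2 := by
      have := Real.sin_sq_add_cos_sq (δ/2); linarith
    nlinarith [norm_nonneg (diskBilliard θ₀ δ t), sq_nonneg (1 - 2*s),
      sq_nonneg (‖diskBilliard θ₀ δ t‖ - Real.cos (δ/2)), hns, hcossq, hcosδ]
  refine ⟨?_, part2, ?_⟩
  · rintro ⟨T₁, hT₁, hper⟩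
    have hy0 : diskBilliard θ₀ δ 0 = diskBounce θ₀ δ 0 := by
      simp [diskBilliard]
    have hT : diskBilliard θ₀ δ T₁ = diskBounce θ₀ δ 0 := by
      have := hper 0 le_rfl
      rwa [zero_add, hy0] at this
    obtain ⟨k, s, hs0, hs1, hsℓ, heq⟩ := hstruct T₁ hT₁.le
    have hb0 : ‖diskBounce θ₀ δ 0‖^2 = 1 := by
      have := norm_sq_eval θ₀ δ 0 0
      simpa using this
    have hnorm1 : (1-s)^2 + s^2 + 2*s*(1-s)*Real.cos δ = 1 := by
      rw [← norm_sq_eval θ₀ δ k s, ← heq, hT, hb0]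
    -- deduce s = 0
    have hsz : s = 0 := by
      have h4 : 4 * (s * (1-s)) * Real.sin (δ/2)^2 = 0 := by
        rw [hcosδ] at hnorm1; nlinarith [hnorm1]
      have : s * (1-s) = 0 := by
        rcases mul_eq_zero.mp h4 with h | h
        · rcases mul_eq_zero.mp h with h' | h'
          · norm_num at h'
          · exact h'
        · exact absurd h (by positivity)
      rcases mul_eq_zero.mp this with h | h
      · exact h
      · linarith
    have hk0 : k ≠ 0 := by
      rintro rfl
      rw [hsz, zero_mul] at hsℓ
      simp at hsℓ
      linarith
    have hbk : diskBounce θ₀ δ k = diskBounce θ₀ δ 0 := by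
      rw [← hT, heq, hsz, zero_smul, add_zero]
    have hc : Real.cos (θ₀ + (k:ℝ)*δ) = Real.cos θ₀ ∧
        Real.sin (θ₀ + (k:ℝ)*δ) = Real.sin θ₀ := by
      have h0 := congrArg (fun v : EuclideanSpace ℝ (Fin 2) => v 0) hbk
      have h1 := congrArg (fun v : EuclideanSpace ℝ (Fin 2) => v 1) hbk
      simp [diskBounce] at h0 h1
      exact ⟨h0, h1⟩
    have hck : Real.cos ((k:ℝ)*δ) = 1 := by
      have h := Real.cos_sub (θ₀ + (k:ℝ)*δ) θ₀
      rw [show θ₀ + (k:ℝ)*δ - θ₀ = (k:ℝ)*δ by ring, hc.1, hc.2] at h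
      rw [h]
      nlinarith [Real.sin_sq_add_cos_sq θ₀]
    obtain ⟨n, hn⟩ := Real.cos_eq_one_iff _ |>.mp hck
    refine hirr ⟨(2*n : ℤ) / (k : ℤ), ?_⟩
    have hπ : (Real.pi : ℝ) ≠ 0 := Real.pi_ne_zero
    have hkr : ((k:ℝ)) ≠ 0 := Nat.cast_ne_zero.mpr hk0
    push_cast
    rw [div_eq_div_iff (by exact_mod_cast hkr) hπ]
    linarith [hn]
  · intro T hT
    have : {t ∈ Set.Icc (0 : ℝ) T |
        diskBilliard θ₀ δ t ∈ {z : EuclideanSpace ℝ (Fin 2) | ‖z‖ < Real.cos (δ / 2)}}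
        = (∅ : Set ℝ) := by
      ext t
      simp only [Set.mem_setOf_eq, Set.mem_sep_iff, Set.mem_Icc, Set.mem_empty_iff_false,
        iff_false, not_and]
      rintro ⟨ht0, -⟩
      exact not_lt.mpr (part2 t ht0)
    rw [this, measure_empty]
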